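/- arXiv:1707.06059 — 2 statements merged into one kernel-verified Lean document; each statement's English description precedes it below -/
import Mathlib

section
/- Let Ψ(n) = 2^{n^γ} with γ ≥ 1 and g(x) = 1/x. Then for every β ∈ (0, ∞], the set F_Ψ(β) = {x ∈ (0,1] : lim_{n→∞} S_n g(x)/Ψ(n) = β} is empty. -/
open Filter Set MeasureTheory
open scoped ENNReal Classical

/-- The doubling map on `(0,1]`. -/
noncomputable def T (x : ℝ) : ℝ := 2 * x - ⌈2 * x⌉ + 1

/-- The Saint-Petersburg potential: `phi x = 2^k` for `x ∈ (2^{-k-1}, 2^{-k}]`. -/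
noncomputable def phi (x : ℝ) : ℝ := 2 ^ ⌊Real.logb 2 x⁻¹⌋

/-- Birkhoff sums of the Saint-Petersburg potential under the doubling map. -/
noncomputable def S (n : ℕ) (x : ℝ) : ℝ := ∑ j ∈ Finset.range n, phi (T^[j] x)

/-- The `n`-th binary digit of `x` (for `n ≥ 1`): `eps n x = ⌈2 T^{n-1} x⌉ - 1`. -/
noncomputable def eps (n : ℕ) (x : ℝ) : ℤ := ⌈2 * T^[n-1] x⌉ - 1

/-!
Write `a n = 1 / T^n x`. The orbit of `x` cannot stay in `(0, 1/2]`, where `T` doubles, so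
`a n` does not tend to infinity. On the other hand, since `Ψ(n + 1) ≥ 2 Ψ(n)`, a limit
`S_n / Ψ(n) → β ∈ (0, ∞)` forces `a n = S_{n+1} - S_n ≳ β Ψ(n) → ∞`; and since `T x ≤ 2 x`
gives `a j ≤ 2^{n-j} a n`, hence `S_n ≤ 2^{n+1} a n`, a limit `S_n / Ψ(n) → ∞` with
`Ψ(n) ≥ 2^n` forces `a n → ∞` as well.
-/

open Topology

section Sequences

variable {a Ψ : ℕ → ℝ}

lemma two_pow_mul_le_of_two_mul_le (hΨ : ∀ n, 2 * Ψ n ≤ Ψ (n + 1)) (n : ℕ) :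
    2 ^ n * Ψ 0 ≤ Ψ n := by
  induction n with
  | zero => simp
  | succ n ih => rw [pow_succ]; linarith [hΨ n]

lemma tendsto_atTop_of_two_mul_le (hΨ0 : 0 < Ψ 0) (hΨ : ∀ n, 2 * Ψ n ≤ Ψ (n + 1)) :
    Tendsto Ψ atTop atTop :=
  tendsto_atTop_mono (two_pow_mul_le_of_two_mul_le hΨ)
    ((tendsto_pow_atTop_atTop_of_one_lt one_lt_two).atTop_mul_const hΨ0)

lemma sum_range_le_of_le_two_mul (ha : ∀ n, a n ≤ 2 * a (n + 1)) (n : ℕ) :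
    ∑ j ∈ Finset.range n, a j ≤ (2 ^ (n + 1) - 2) * a n := by
  induction n with
  | zero => simp
  | succ n ih =>
    have hpow : (1 : ℝ) ≤ 2 ^ (n + 1) := one_le_pow₀ one_le_two
    calc ∑ j ∈ Finset.range (n + 1), a j ≤ (2 ^ (n + 1) - 1) * a n := by
          rw [Finset.sum_range_succ]; linarith
      _ ≤ (2 ^ (n + 1) - 1) * (2 * a (n + 1)) :=
          mul_le_mul_of_nonneg_left (ha n) (by linarith)
      _ = (2 ^ (n + 1 + 1) - 2) * a (n + 1) := by ring

lemma tendsto_atTop_of_tendsto_sum_div_nhds (hΨpos : ∀ n, 0 < Ψ n)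
    (hΨ : ∀ n, 2 * Ψ n ≤ Ψ (n + 1)) {β : ℝ} (hβ : 0 < β)
    (h : Tendsto (fun n => (∑ j ∈ Finset.range n, a j) / Ψ n) atTop (𝓝 β)) :
    Tendsto a atTop atTop := by
  set u := fun n => (∑ j ∈ Finset.range n, a j) / Ψ n
  have hu : ∀ n, ∑ j ∈ Finset.range n, a j = u n * Ψ n :=
    fun n => (div_mul_cancel₀ _ (hΨpos n).ne').symm
  have hu_succ : Tendsto (fun n => u (n + 1)) atTop (𝓝 β) := h.comp (tendsto_add_atTop_nat 1)
  have hlim : Tendsto (fun n => (2 * u (n + 1) - u n) * Ψ n) atTop atTop := by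
    refine Tendsto.pos_mul_atTop hβ ?_ (tendsto_atTop_of_two_mul_le (hΨpos 0) hΨ)
    convert (hu_succ.const_mul 2).sub h using 2
    ring
  refine tendsto_atTop_mono' _ ?_ hlim
  filter_upwards [hu_succ.eventually (lt_mem_nhds hβ)] with n hn
  have ha : a n = u (n + 1) * Ψ (n + 1) - u n * Ψ n := by
    rw [← hu, ← hu, Finset.sum_range_succ]; ring
  rw [ha]
  nlinarith [mul_le_mul_of_nonneg_left (hΨ n) hn.le]

lemma tendsto_atTop_of_tendsto_sum_div_atTop {c : ℝ} (hc : 0 < c) (hΨ : ∀ n, 2 ^ n * c ≤ Ψ n)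
    (ha0 : ∀ n, 0 ≤ a n) (ha : ∀ n, a n ≤ 2 * a (n + 1))
    (h : Tendsto (fun n => (∑ j ∈ Finset.range n, a j) / Ψ n) atTop atTop) :
    Tendsto a atTop atTop := by
  refine tendsto_atTop_mono' _ ?_ (h.atTop_mul_const (half_pos hc))
  filter_upwards [h.eventually_ge_atTop 0] with n hn
  have hΨn : Ψ n ≠ 0 := ((mul_pos (pow_pos two_pos n) hc).trans_le (hΨ n)).ne'
  refine le_of_mul_le_mul_right ?_ (pow_pos (two_pos : (0 : ℝ) < 2) (n + 1))
  calc (∑ j ∈ Finset.range n, a j) / Ψ n * (c / 2) * 2 ^ (n + 1)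
        = (∑ j ∈ Finset.range n, a j) / Ψ n * (2 ^ n * c) := by ring
    _ ≤ (∑ j ∈ Finset.range n, a j) / Ψ n * Ψ n := mul_le_mul_of_nonneg_left (hΨ n) hn
    _ = ∑ j ∈ Finset.range n, a j := div_mul_cancel₀ _ hΨn
    _ ≤ (2 ^ (n + 1) - 2) * a n := sum_range_le_of_le_two_mul ha n
    _ ≤ a n * 2 ^ (n + 1) := by nlinarith [ha0 n]

end Sequences

section DoublingMap

variable {x : ℝ}

lemma T_mem_Ioc (hx : x ∈ Ioc 0 1) : T x ∈ Ioc 0 1 := by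
  obtain ⟨hx₀, hx₁⟩ := hx
  have h₁ := Int.ceil_lt_add_one (2 * x)
  have h₂ := Int.le_ceil (2 * x)
  constructor <;> unfold T <;> linarith

lemma iterate_T_mem_Ioc (hx : x ∈ Ioc 0 1) (n : ℕ) : T^[n] x ∈ Ioc 0 1 := by
  induction n with
  | zero => exact hx
  | succ n ih => rw [Function.iterate_succ_apply']; exact T_mem_Ioc ih

lemma T_le_two_mul (hx : 0 < x) : T x ≤ 2 * x := by
  have h : (1 : ℝ) ≤ ⌈2 * x⌉ := by exact_mod_cast Int.ceil_pos.mpr (by linarith)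
  unfold T; linarith

lemma T_eq_two_mul (hx₀ : 0 < x) (hx : x ≤ 2⁻¹) : T x = 2 * x := by
  have h : ⌈2 * x⌉ = 1 := by
    rw [Int.ceil_eq_iff]; norm_num; constructor <;> linarith
  unfold T; rw [h]; push_cast; ring

lemma inv_iterate_T_le_two_mul (hx : x ∈ Ioc 0 1) (n : ℕ) :
    (T^[n] x)⁻¹ ≤ 2 * (T^[n + 1] x)⁻¹ := by
  have hpos := (iterate_T_mem_Ioc hx n).1
  have hle : T^[n + 1] x ≤ 2 * T^[n] x := by
    rw [Function.iterate_succ_apply']; exact T_le_two_mul hpos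
  calc (T^[n] x)⁻¹ = 2 * (2 * T^[n] x)⁻¹ := by field_simp
    _ ≤ 2 * (T^[n + 1] x)⁻¹ := by
      gcongr
      exact (iterate_T_mem_Ioc hx (n + 1)).1

lemma not_tendsto_inv_iterate_T_atTop (hx : x ∈ Ioc 0 1) :
    ¬ Tendsto (fun n => (T^[n] x)⁻¹) atTop atTop := by
  intro h
  obtain ⟨N, hN⟩ := eventually_atTop.mp (h.eventually_ge_atTop 2)
  have hdouble : ∀ k, T^[N + k] x = 2 ^ k * T^[N] x := by
    intro k
    induction k with
    | zero => simp
    | succ k ih =>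
      have hpos := (iterate_T_mem_Ioc hx (N + k)).1
      have hhalf : T^[N + k] x ≤ 2⁻¹ := (le_inv_comm₀ two_pos hpos).mp (hN (N + k) (by omega))
      rw [← add_assoc, Function.iterate_succ_apply', T_eq_two_mul hpos hhalf, ih, pow_succ]
      ring
  obtain ⟨k, hk⟩ := (((tendsto_pow_atTop_atTop_of_one_lt one_lt_two).atTop_mul_const
    (iterate_T_mem_Ioc hx N).1).eventually_gt_atTop 1).exists
  have := (iterate_T_mem_Ioc hx (N + k)).2
  rw [hdouble k] at this
  linarith

end DoublingMap

lemma two_mul_two_rpow_le_two_rpow_succ {γ : ℝ} (hγ : 1 ≤ γ) (n : ℕ) :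
    2 * (2 : ℝ) ^ ((n : ℝ) ^ γ) ≤ 2 ^ (((n + 1 : ℕ) : ℝ) ^ γ) := by
  have hsuper : (n : ℝ) ^ γ + 1 ≤ ((n : ℝ) + 1) ^ γ := by
    simpa using Real.add_rpow_le_rpow_add n.cast_nonneg zero_le_one hγ
  calc 2 * (2 : ℝ) ^ ((n : ℝ) ^ γ) = 2 ^ ((n : ℝ) ^ γ + 1) := by
        rw [Real.rpow_add_one two_ne_zero]; ring
    _ ≤ 2 ^ (((n + 1 : ℕ) : ℝ) ^ γ) := by
        push_cast; exact Real.rpow_le_rpow_of_exponent_le one_le_two hsuper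

theorem saint_petersburg_stmt17 (γ : ℝ) (hγ : 1 ≤ γ) :
    (∀ β : ℝ, 0 < β →
      {x : ℝ | x ∈ Set.Ioc (0 : ℝ) 1 ∧
        Filter.Tendsto
          (fun n : ℕ => (∑ j ∈ Finset.range n, (T^[j] x)⁻¹) / (2 : ℝ) ^ ((n : ℝ) ^ γ))
          Filter.atTop (nhds β)} = ∅) ∧
    {x : ℝ | x ∈ Set.Ioc (0 : ℝ) 1 ∧
      Filter.Tendsto
        (fun n : ℕ => (∑ j ∈ Finset.range n, (T^[j] x)⁻¹) / (2 : ℝ) ^ ((n : ℝ) ^ γ))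
        Filter.atTop Filter.atTop} = ∅ := by
  have hΨpos : ∀ n : ℕ, (0 : ℝ) < 2 ^ ((n : ℝ) ^ γ) := fun n => by positivity
  have hΨ := two_mul_two_rpow_le_two_rpow_succ hγ
  refine ⟨fun β hβ => ?_, ?_⟩ <;>
    refine eq_empty_of_forall_notMem fun x ⟨hx, hlim⟩ => not_tendsto_inv_iterate_T_atTop hx ?_
  · exact tendsto_atTop_of_tendsto_sum_div_nhds hΨpos hΨ hβ hlim
  · exact tendsto_atTop_of_tendsto_sum_div_atTop (hΨpos 0) (two_pow_mul_le_of_two_mul_le hΨ)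
      (fun n => (inv_pos.mpr (iterate_T_mem_Ioc hx n).1).le) (inv_iterate_T_le_two_mul hx) hlim
end

section
/- Let x ∈ (0,1] be such that the sequence ℓ ↦ (2^{n_1}+⋯+2^{n_ℓ}−ℓ)/(n_1+⋯+n_ℓ) converges to α as ℓ → ∞, where the binary expansion of x is [0^{n_1-1}1 0^{n_2-1}1 ⋯]. Then 2^{n_{ℓ+1}} = o(n_1+⋯+n_ℓ) as ℓ → ∞, and consequently lim_{n→∞} S_n(x)/n = α. -/
open Filter Set MeasureTheory
open scoped ENNReal Classical

/-!
Since `phi (2 * y) = phi y / 2` and `T y = 2 * y` for `y ≤ 1/2`, a block of digits `0 ⋯ 0 1` of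
length `m + 1` contributes exactly `2 ^ (m + 1) - 1` to the Birkhoff sum; hence `S` at the partial
sums `N ℓ = ∑_{k < ℓ} n k` equals `B ℓ = ∑_{k < ℓ} 2 ^ n k - ℓ`. With `A ℓ = B ℓ / N ℓ → α`, the
relation `B (ℓ + 1) = B ℓ + 2 ^ n ℓ - 1` reads
`2 ^ n ℓ = (A (ℓ + 1) - A ℓ) * N ℓ + A (ℓ + 1) * n ℓ + 1`, and as `n ℓ` is negligible against
`2 ^ n ℓ` this forces `2 ^ n ℓ = o(N ℓ)`. Then `N (ℓ + 1) / N ℓ → 1`, and for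
`N ℓ ≤ m < N (ℓ + 1)` monotonicity of `S` traps `S m x / m` between `B ℓ / N (ℓ + 1)` and
`B (ℓ + 1) / N ℓ`, both of which tend to `α`.
-/

open Topology

lemma T_mem_Ioc_s18 (y : ℝ) : T y ∈ Set.Ioc (0 : ℝ) 1 := by
  have h₁ := Int.ceil_lt_add_one (2 * y)
  have h₂ := Int.le_ceil (2 * y)
  constructor <;> simp only [T] <;> linarith

lemma iterate_T_mem_Ioc_s18 {y : ℝ} (hy : y ∈ Set.Ioc (0 : ℝ) 1) : ∀ j, T^[j] y ∈ Set.Ioc (0 : ℝ) 1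
  | 0 => hy
  | j + 1 => by rw [Function.iterate_succ_apply']; exact T_mem_Ioc_s18 _

lemma ceil_two_mul_of_le_half {y : ℝ} (h₀ : 0 < y) (h : y ≤ 1 / 2) : ⌈2 * y⌉ = 1 := by
  rw [Int.ceil_eq_iff]; constructor <;> push_cast <;> linarith

lemma ceil_two_mul_of_half_lt {y : ℝ} (h : 1 / 2 < y) (h₁ : y ≤ 1) : ⌈2 * y⌉ = 2 := by
  rw [Int.ceil_eq_iff]; constructor <;> push_cast <;> linarith

lemma T_eq_two_mul_s18 {y : ℝ} (h₀ : 0 < y) (h : y ≤ 1 / 2) : T y = 2 * y := by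
  simp [T, ceil_two_mul_of_le_half h₀ h]

lemma eps_succ_eq_one_iff {y : ℝ} (hy : y ∈ Set.Ioc (0 : ℝ) 1) (i : ℕ) :
    eps (i + 1) y = 1 ↔ 1 / 2 < T^[i] y := by
  obtain ⟨h₀, h₁⟩ := iterate_T_mem_Ioc_s18 hy i
  rw [eps, Nat.add_sub_cancel]
  constructor
  · intro h
    by_contra! h'
    rw [ceil_two_mul_of_le_half h₀ h'] at h
    norm_num at h
  · intro h
    rw [ceil_two_mul_of_half_lt h h₁]
    norm_num

lemma phi_of_half_lt {y : ℝ} (h : 1 / 2 < y) (h₁ : y ≤ 1) : phi y = 1 := by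
  have hy : 0 < y := by linarith
  have : ⌊Real.logb 2 y⁻¹⌋ = 0 := by
    rw [Int.floor_eq_zero_iff]
    constructor
    · exact Real.logb_nonneg one_lt_two (one_le_inv₀ hy |>.2 h₁)
    · rw [Real.logb_lt_iff_lt_rpow one_lt_two (by positivity), Real.rpow_one]
      rw [inv_lt_comm₀ hy two_pos]
      linarith
  rw [phi, this, zpow_zero]

lemma phi_eq_two_mul_phi_two_mul {y : ℝ} (hy : y ≠ 0) : phi y = 2 * phi (2 * y) := by
  have : Real.logb 2 (2 * y)⁻¹ = Real.logb 2 y⁻¹ - 1 := by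
    rw [mul_inv, Real.logb_mul (by norm_num) (inv_ne_zero hy), Real.logb_inv,
      Real.logb_self_eq_one one_lt_two]
    ring
  rw [phi, phi, this, Int.floor_sub_one, zpow_sub_one₀ two_ne_zero]
  ring

lemma phi_pos (y : ℝ) : 0 < phi y := by
  unfold phi; positivity

lemma S_succ (m : ℕ) (y : ℝ) : S (m + 1) y = phi y + S m (T y) := by
  simp only [S, Finset.sum_range_succ', Function.iterate_succ_apply, Function.iterate_zero_apply]
  ring

lemma S_add (a b : ℕ) (y : ℝ) : S (a + b) y = S a y + S b (T^[a] y) := by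
  rw [S, Finset.sum_range_add]
  congr 1
  refine Finset.sum_congr rfl fun j _ => ?_
  rw [← Function.iterate_add_apply, add_comm]

lemma S_nonneg (m : ℕ) (y : ℝ) : 0 ≤ S m y :=
  Finset.sum_nonneg fun _ _ => (phi_pos _).le

lemma S_mono (y : ℝ) : Monotone fun m => S m y := fun _ _ h =>
  Finset.sum_le_sum_of_subset_of_nonneg (Finset.range_subset_range.2 h)
    fun _ _ _ => (phi_pos _).le

lemma phi_eq_two_pow {m : ℕ} : ∀ {y : ℝ}, y ∈ Set.Ioc (0 : ℝ) 1 →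
    (∀ i < m, T^[i] y ≤ 1 / 2) → 1 / 2 < T^[m] y → phi y = 2 ^ m := by
  induction m with
  | zero => intro y hy _ h; exact phi_of_half_lt h hy.2
  | succ m ih =>
    intro y hy hlow hhigh
    have hy' := hlow 0 m.succ_pos
    rw [phi_eq_two_mul_phi_two_mul hy.1.ne', ← T_eq_two_mul_s18 hy.1 hy',
      ih (T_mem_Ioc_s18 y) (fun i hi => hlow (i + 1) (by omega)) hhigh, pow_succ]
    ring

lemma S_eq_two_pow_sub_one {m : ℕ} : ∀ {y : ℝ}, y ∈ Set.Ioc (0 : ℝ) 1 →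
    (∀ i < m, T^[i] y ≤ 1 / 2) → 1 / 2 < T^[m] y → S (m + 1) y = 2 ^ (m + 1) - 1 := by
  induction m with
  | zero =>
    intro y hy _ h
    rw [S_succ, phi_of_half_lt (y := y) h hy.2, S, Finset.sum_range_zero]
    norm_num
  | succ m ih =>
    intro y hy hlow hhigh
    rw [S_succ, phi_eq_two_pow hy hlow hhigh,
      ih (T_mem_Ioc_s18 y) (fun i hi => hlow (i + 1) (by omega)) hhigh]
    ring

lemma strictMono_sum_range {n : ℕ → ℕ} (hn : ∀ k, 1 ≤ n k) :
    StrictMono fun ℓ => ∑ k ∈ Finset.range ℓ, n k :=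
  strictMono_nat_of_lt_succ fun ℓ => by rw [Finset.sum_range_succ]; have := hn ℓ; omega

lemma S_sum_range {x : ℝ} (hx : x ∈ Set.Ioc (0 : ℝ) 1) {n : ℕ → ℕ} (hn : ∀ k, 1 ≤ n k)
    (hdig : ∀ j, 1 ≤ j → (eps j x = 1 ↔ ∃ ℓ : ℕ, j = ∑ k ∈ Finset.range (ℓ + 1), n k))
    (ℓ : ℕ) : S (∑ k ∈ Finset.range ℓ, n k) x = ∑ k ∈ Finset.range ℓ, (2 : ℝ) ^ n k - ℓ := by
  obtain ⟨N, hN⟩ : ∃ N : ℕ → ℕ, ∀ ℓ, ∑ k ∈ Finset.range ℓ, n k = N ℓ := ⟨_, fun _ => rfl⟩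
  have hNsucc (ℓ : ℕ) : N (ℓ + 1) = N ℓ + n ℓ := by rw [← hN, ← hN, Finset.sum_range_succ]
  have hmono : StrictMono N := by simpa only [hN] using strictMono_sum_range hn
  have hdig' (j : ℕ) : 1 / 2 < T^[j] x ↔ ∃ m, j + 1 = N (m + 1) := by
    simp only [← eps_succ_eq_one_iff hx, hdig (j + 1) j.succ_pos, hN]
  rw [hN]
  induction ℓ with
  | zero => simp [← hN, S]
  | succ ℓ ih =>
    obtain ⟨p, hp⟩ : ∃ p, n ℓ = p + 1 := ⟨n ℓ - 1, by have := hn ℓ; omega⟩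
    have hlow : ∀ i < p, T^[i] (T^[N ℓ] x) ≤ 1 / 2 := by
      intro i hi
      rw [← Function.iterate_add_apply]
      by_contra! h
      obtain ⟨m, hm⟩ := (hdig' _).1 h
      have h₁ : ℓ < m + 1 := hmono.lt_iff_lt.1 (by omega)
      have h₂ : m + 1 < ℓ + 1 := hmono.lt_iff_lt.1 (by rw [hNsucc ℓ]; omega)
      omega
    have hhigh : 1 / 2 < T^[p] (T^[N ℓ] x) := by
      rw [← Function.iterate_add_apply, hdig']
      exact ⟨ℓ, by rw [hNsucc]; omega⟩
    rw [hNsucc, hp, S_add, ih, S_eq_two_pow_sub_one (iterate_T_mem_Ioc_s18 hx _) hlow hhigh,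
      Finset.sum_range_succ, hp]
    push_cast
    ring

lemma exists_mul_le_two_pow_div_two_add (c : ℝ) : ∃ C : ℝ, ∀ m : ℕ, c * m ≤ 2 ^ m / 2 + C := by
  have hε : (0 : ℝ) < 1 / (2 * (|c| + 1)) := by positivity
  obtain ⟨M, hM⟩ := eventually_atTop.1 <|
    (tendsto_pow_const_div_const_pow_of_one_lt 1 one_lt_two).eventually (gt_mem_nhds hε)
  refine ⟨|c| * M, fun m => ?_⟩
  have hcm : c * m ≤ |c| * m := mul_le_mul_of_nonneg_right (le_abs_self c) m.cast_nonneg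
  rcases lt_or_ge m M with hm | hm
  · have : (m : ℝ) ≤ M := by exact_mod_cast hm.le
    have : |c| * m ≤ |c| * M := mul_le_mul_of_nonneg_left this (abs_nonneg c)
    have : (0 : ℝ) ≤ 2 ^ m := by positivity
    linarith
  · have h := hM m hm
    rw [pow_one, div_lt_div_iff₀ (by positivity) (by positivity), one_mul] at h
    have : (0 : ℝ) ≤ |c| * M := by positivity
    nlinarith [abs_nonneg c, m.cast_nonneg (α := ℝ)]

theorem tendsto_two_pow_div_of_tendsto {A N : ℕ → ℝ} {n : ℕ → ℕ} {α : ℝ}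
    (hN : Tendsto N atTop atTop) (hA : Tendsto A atTop (𝓝 α))
    (hrec : ∀ᶠ ℓ in atTop, A (ℓ + 1) * (N ℓ + n ℓ) = A ℓ * N ℓ + 2 ^ n ℓ - 1) :
    Tendsto (fun ℓ => (2 : ℝ) ^ n ℓ / N ℓ) atTop (𝓝 0) := by
  obtain ⟨C, hC⟩ := exists_mul_le_two_pow_div_two_add (α + 1)
  have hA' : Tendsto (fun ℓ => A (ℓ + 1)) atTop (𝓝 α) := hA.comp (tendsto_add_atTop_nat 1)
  have hbound : Tendsto (fun ℓ => 2 * (A (ℓ + 1) - A ℓ) + 2 * (C + 1) / N ℓ) atTop (𝓝 0) := by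
    simpa using ((hA'.sub hA).const_mul 2).add (tendsto_const_nhds.div_atTop hN)
  refine tendsto_of_tendsto_of_tendsto_of_le_of_le' tendsto_const_nhds hbound ?_ ?_
  · filter_upwards [hN.eventually_gt_atTop 0] with ℓ hℓ
    positivity
  · filter_upwards [hN.eventually_gt_atTop 0, hA'.eventually (ge_mem_nhds (lt_add_one α)), hrec]
      with ℓ hNℓ hAℓ hrecℓ
    -- `A (ℓ + 1) * n ℓ ≤ (α + 1) * n ℓ ≤ 2 ^ n ℓ / 2 + C` absorbs half of `2 ^ n ℓ`.
    have hn : A (ℓ + 1) * n ℓ ≤ (α + 1) * n ℓ :=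
      mul_le_mul_of_nonneg_right hAℓ (n ℓ).cast_nonneg
    have key : (2 : ℝ) ^ n ℓ ≤ 2 * (A (ℓ + 1) - A ℓ) * N ℓ + 2 * (C + 1) := by
      linarith [hC (n ℓ)]
    calc (2 : ℝ) ^ n ℓ / N ℓ ≤ (2 * (A (ℓ + 1) - A ℓ) * N ℓ + 2 * (C + 1)) / N ℓ := by gcongr
      _ = 2 * (A (ℓ + 1) - A ℓ) + 2 * (C + 1) / N ℓ := by field_simp

lemma tendsto_natCast_sum_range_atTop {n : ℕ → ℕ} (hn : ∀ k, 1 ≤ n k) :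
    Tendsto (fun ℓ => ((∑ k ∈ Finset.range ℓ, n k : ℕ) : ℝ)) atTop atTop :=
  tendsto_natCast_atTop_atTop.comp (strictMono_sum_range hn).tendsto_atTop

theorem tendsto_two_pow_div_sum_range {n : ℕ → ℕ} (hn : ∀ k, 1 ≤ n k) {α : ℝ}
    (hlim : Tendsto (fun ℓ : ℕ => ((∑ k ∈ Finset.range ℓ, (2 : ℝ) ^ n k) - ℓ) /
      ((∑ k ∈ Finset.range ℓ, n k : ℕ) : ℝ)) atTop (𝓝 α)) :
    Tendsto (fun ℓ => (2 : ℝ) ^ n ℓ / ((∑ k ∈ Finset.range ℓ, n k : ℕ) : ℝ)) atTop (𝓝 0) := by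
  refine tendsto_two_pow_div_of_tendsto (tendsto_natCast_sum_range_atTop hn) hlim ?_
  filter_upwards [(tendsto_natCast_sum_range_atTop hn).eventually_gt_atTop 0] with ℓ hℓ
  have : (0 : ℝ) < n ℓ := by exact_mod_cast hn ℓ
  simp only [Finset.sum_range_succ, Nat.cast_add, Nat.cast_sum] at hℓ ⊢
  field_simp
  push_cast
  ring

lemma tendsto_sum_range_succ_div_sum_range {n : ℕ → ℕ} (hn : ∀ k, 1 ≤ n k)
    (hpow : Tendsto (fun ℓ => (2 : ℝ) ^ n ℓ / ((∑ k ∈ Finset.range ℓ, n k : ℕ) : ℝ)) atTop (𝓝 0)) :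
    Tendsto (fun ℓ => ((∑ k ∈ Finset.range (ℓ + 1), n k : ℕ) : ℝ) /
      ((∑ k ∈ Finset.range ℓ, n k : ℕ) : ℝ)) atTop (𝓝 1) := by
  have hNpos := (tendsto_natCast_sum_range_atTop hn).eventually_gt_atTop 0
  have hsmall : Tendsto (fun ℓ => (n ℓ : ℝ) / ((∑ k ∈ Finset.range ℓ, n k : ℕ) : ℝ))
      atTop (𝓝 0) := by
    refine tendsto_of_tendsto_of_tendsto_of_le_of_le' tendsto_const_nhds hpow ?_ ?_
    · exact Eventually.of_forall fun ℓ => by positivity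
    · filter_upwards [hNpos] with ℓ hℓ
      gcongr
      exact_mod_cast (Nat.lt_two_pow_self).le
  have h := (tendsto_const_nhds (x := (1 : ℝ))).add hsmall
  rw [add_zero] at h
  refine h.congr' ?_
  filter_upwards [hNpos] with ℓ hℓ
  rw [Finset.sum_range_succ, Nat.cast_add, add_div, div_self hℓ.ne']

theorem Monotone.tendsto_div_of_tendsto_comp {f : ℕ → ℝ} (hf : Monotone f) (hf₀ : ∀ m, 0 ≤ f m)
    {N : ℕ → ℕ} (hN : StrictMono N) (hN₀ : N 0 = 0) {α : ℝ}
    (hratio : Tendsto (fun ℓ => (N (ℓ + 1) : ℝ) / N ℓ) atTop (𝓝 1))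
    (hlim : Tendsto (fun ℓ => f (N ℓ) / N ℓ) atTop (𝓝 α)) :
    Tendsto (fun m => f m / m) atTop (𝓝 α) := by
  have hblock (m : ℕ) : ∃ ℓ, N ℓ ≤ m ∧ m < N (ℓ + 1) := by
    obtain ⟨ℓ, h₁, h₂⟩ :=
      hN.exists_between_of_tendsto_atTop hN.tendsto_atTop (x := m + 1) (by omega)
    exact ⟨ℓ, by omega, by omega⟩
  choose L hL₁ hL₂ using hblock
  have hL : Tendsto L atTop atTop := tendsto_atTop.2 fun b => by
    filter_upwards [eventually_ge_atTop (N b)] with m hm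
    by_contra! h
    have := hN.monotone (show L m + 1 ≤ b by omega)
    have := hL₂ m
    omega
  have hNpos : ∀ᶠ ℓ in atTop, (0 : ℝ) < N ℓ :=
    (tendsto_natCast_atTop_atTop.comp hN.tendsto_atTop).eventually_gt_atTop 0
  have hNsucc_pos (ℓ : ℕ) : (0 : ℝ) < N (ℓ + 1) := by
    exact_mod_cast hN₀ ▸ hN ℓ.succ_pos
  have hlow : Tendsto (fun ℓ => f (N ℓ) / N (ℓ + 1)) atTop (𝓝 α) := by
    have h := hlim.div hratio one_ne_zero
    rw [div_one] at h
    refine h.congr' ?_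
    filter_upwards [hNpos] with ℓ hℓ
    have := hNsucc_pos ℓ
    simp only [Pi.div_apply]
    field_simp
  have hup : Tendsto (fun ℓ => f (N (ℓ + 1)) / N ℓ) atTop (𝓝 α) := by
    have h := (hlim.comp (tendsto_add_atTop_nat 1)).mul hratio
    rw [mul_one] at h
    refine h.congr' ?_
    filter_upwards [hNpos] with ℓ hℓ
    have := hNsucc_pos ℓ
    simp only [Function.comp_apply]
    field_simp
  refine tendsto_of_tendsto_of_tendsto_of_le_of_le' (hlow.comp hL) (hup.comp hL) ?_ ?_
  · filter_upwards [eventually_gt_atTop 0] with m hm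
    exact div_le_div₀ (hf₀ m) (hf (hL₁ m)) (by exact_mod_cast hm) (by exact_mod_cast (hL₂ m).le)
  · filter_upwards [hL.eventually hNpos] with m hm
    exact div_le_div₀ (hf₀ _) (hf (hL₂ m).le) hm (by exact_mod_cast hL₁ m)

theorem saint_petersburg_stmt18_general (x : ℝ) (hx : x ∈ Set.Ioc (0 : ℝ) 1)
    (α : ℝ) (n : ℕ → ℕ) (hn : ∀ k, 1 ≤ n k)
    (hdig : ∀ j, 1 ≤ j →
      (eps j x = 1 ↔ ∃ ℓ : ℕ, j = ∑ k ∈ Finset.range (ℓ + 1), n k))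
    (hlim : Filter.Tendsto
      (fun ℓ : ℕ =>
        ((∑ k ∈ Finset.range ℓ, (2 : ℝ) ^ (n k)) - ℓ) /
          ((∑ k ∈ Finset.range ℓ, n k : ℕ) : ℝ))
      Filter.atTop (nhds α)) :
    Filter.Tendsto
      (fun ℓ : ℕ => (2 : ℝ) ^ (n ℓ) / ((∑ k ∈ Finset.range ℓ, n k : ℕ) : ℝ))
      Filter.atTop (nhds 0) ∧
    Filter.Tendsto (fun m : ℕ => S m x / m) Filter.atTop (nhds α) := by
  have hpow := tendsto_two_pow_div_sum_range hn hlim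
  refine ⟨hpow, (S_mono x).tendsto_div_of_tendsto_comp (S_nonneg · x) (strictMono_sum_range hn)
    (Finset.sum_range_zero n) (tendsto_sum_range_succ_div_sum_range hn hpow) ?_⟩
  simpa only [S_sum_range hx hn hdig] using hlim

theorem saint_petersburg_stmt18 (x : ℝ) (hx : x ∈ Set.Ioc (0 : ℝ) 1)
    (α : ℝ) (hα : 1 ≤ α) (n : ℕ → ℕ) (hn : ∀ k, 1 ≤ n k)
    (hdig : ∀ j, 1 ≤ j →
      (eps j x = 1 ↔ ∃ ℓ : ℕ, j = ∑ k ∈ Finset.range (ℓ + 1), n k))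
    (hlim : Filter.Tendsto
      (fun ℓ : ℕ =>
        ((∑ k ∈ Finset.range ℓ, (2 : ℝ) ^ (n k)) - ℓ) /
          ((∑ k ∈ Finset.range ℓ, n k : ℕ) : ℝ))
      Filter.atTop (nhds α)) :
    Filter.Tendsto
      (fun ℓ : ℕ => (2 : ℝ) ^ (n ℓ) / ((∑ k ∈ Finset.range ℓ, n k : ℕ) : ℝ))
      Filter.atTop (nhds 0) ∧
    Filter.Tendsto (fun m : ℕ => S m x / m) Filter.atTop (nhds α) :=
  saint_petersburg_stmt18_general x hx α n hn hdig hlim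
end
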